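/- There exists a constant C > 0, independent of ρ and of the penalty term Π, such that for every ρ > 0, every penalty term Π, and every solution z_ρ of the penalised obstacle equation, one has ‖ min{ max_{u∈U}{A_u z_ρ − b_u} , max{Ãz_ρ − b̃ , 0} − Π(b̃ − Ãz_ρ) } ‖∞ ≤ C/ρ, where the i-th component of the vector inside the norm is min{ max_{u∈U}(A_u z_ρ − b_u)_i , max{(Ãz_ρ − b̃)_i , 0} − π_i((b̃ − Ãz_ρ)_i) }. -/

import Mathlib

open Matrix Filter

/-!
At a solution `z`, the `i`-th entry of `max_u (A_u z - b_u)` equals `ρ π_i((b̃ - Ãz)_i) ≥ 0`.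
Hence the `i`-th residual entry is `0` if `(b̃ - Ãz)_i ≤ 0`, and `-π_i(…) = -max_u (A_u z - b_u)_i / ρ`
otherwise, so it suffices to bound `z` independently of `ρ` and `Π`. This is a discrete maximum
principle for the Z-matrices `A_u`, `Ã`, whose diagonal dominance is uniform by compactness of `U`:
at a minimal entry `j` of `z` some `(A_u z)_j ≥ (b_u)_j`, forcing `z_j ≥ -‖b‖ / δ`; at a maximal
entry `k` either `(Ãz)_k ≤ b̃_k`, giving `z_k ≤ ‖b̃‖ / δ̃`, or the penalty vanishes there, so
`(A_u z)_k ≤ (b_u)_k` for all `u` and `z_k ≤ ‖b‖ / δ`.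
-/

/-- The set `K^o_N`: Z-matrices (non-positive off-diagonal entries) which are
strictly diagonally dominant. -/
def KoMat {N : ℕ} (A : Matrix (Fin N) (Fin N) ℝ) : Prop :=
  (∀ r s, r ≠ s → A r s ≤ 0) ∧
  ∀ r, ∑ s ∈ Finset.univ.erase r, |A r s| < A r r

structure PenaltyTerm (N : ℕ) where
  π : Fin N → ℝ → ℝ
  cont : ∀ i, Continuous (π i)
  mono : ∀ i, Monotone (π i)
  eq_zero : ∀ i y, y ≤ 0 → π i y = 0
  pos : ∀ i y, 0 < y → 0 < π i y

/-- The penalised obstacle equation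
`max_{u∈U}{A_u z - b_u} - ρ · Π(b̃ - Ã z) = 0` (componentwise); the maximum over
the compact set `U` is expressed via `sSup` of the image. -/
def PenObstEq {N : ℕ} (𝔄 : ℝ → Matrix (Fin N) (Fin N) ℝ) (𝔅 : ℝ → (Fin N → ℝ))
    (U : Set ℝ) (At : Matrix (Fin N) (Fin N) ℝ) (bt : Fin N → ℝ)
    (P : PenaltyTerm N) (ρ : ℝ) (z : Fin N → ℝ) : Prop :=
  ∀ i : Fin N,
    sSup ((fun u => (𝔄 u *ᵥ z - 𝔅 u) i) '' U) -
      ρ * P.π i ((bt - At *ᵥ z) i) = 0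

/-- Rows of a Z-matrix satisfy `∑ s, A r s = A r r - ∑_{s ≠ r} |A r s|`, so this says that `A`
is strictly diagonally dominant with margin `δ`. -/
def DiagDominantWith {n : Type*} [Fintype n] (δ : ℝ) (A : Matrix n n ℝ) : Prop :=
  (∀ r s, r ≠ s → A r s ≤ 0) ∧ ∀ r, δ ≤ ∑ s, A r s

section DiagDominant

variable {n : Type*} [Fintype n] {A : Matrix n n ℝ} {δ c : ℝ} {z : n → ℝ} {k : n}

lemma sum_row_mul_le_mulVec_apply (hA : ∀ r s, r ≠ s → A r s ≤ 0) (hk : ∀ s, z s ≤ z k) :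
    (∑ s, A k s) * z k ≤ (A *ᵥ z) k := by
  rw [Finset.sum_mul]
  refine Finset.sum_le_sum fun s _ => ?_
  rcases eq_or_ne s k with rfl | hs
  · exact le_rfl
  · exact mul_le_mul_of_nonpos_left (hk s) (hA k s hs.symm)

lemma DiagDominantWith.apply_le_div (hA : DiagDominantWith δ A) (hδ : 0 < δ)
    (hk : ∀ s, z s ≤ z k) (hc : 0 ≤ c) (h : (A *ᵥ z) k ≤ c) : z k ≤ c / δ := by
  have hmul := sum_row_mul_le_mulVec_apply hA.1 hk
  rw [le_div_iff₀ hδ]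
  rcases le_or_gt (z k) 0 with hz | hz
  · nlinarith
  · nlinarith [mul_le_mul_of_nonneg_right (hA.2 k) hz.le]

end DiagDominant

lemma KoMat.sum_row_pos {N : ℕ} {A : Matrix (Fin N) (Fin N) ℝ} (hA : KoMat A) (r : Fin N) :
    0 < ∑ s, A r s := by
  have hoff : -∑ s ∈ Finset.univ.erase r, |A r s| ≤ ∑ s ∈ Finset.univ.erase r, A r s := by
    rw [← Finset.sum_neg_distrib]
    exact Finset.sum_le_sum fun s _ => neg_abs_le (A r s)
  rw [← Finset.add_sum_erase _ _ (Finset.mem_univ r)]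
  linarith [hA.2 r]

section Families

variable {X : Type*} [TopologicalSpace X] {U : Set X} {N : ℕ}
  {𝔄 : X → Matrix (Fin N) (Fin N) ℝ} {𝔅 : X → Fin N → ℝ}

lemma exists_diagDominantWith (hU : IsCompact U) (hA : ContinuousOn 𝔄 U)
    (hK : ∀ u ∈ U, KoMat (𝔄 u)) : ∃ δ > 0, ∀ u ∈ U, DiagDominantWith δ (𝔄 u) := by
  have hcont : ContinuousOn (fun p : X × Fin N => ∑ s, 𝔄 p.1 p.2 s) (U ×ˢ Set.univ) :=
    continuousOn_prod_of_discrete_right.2 fun r => by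
      refine continuousOn_finsetSum _ fun s _ => ?_
      exact ((continuous_apply s).comp (continuous_apply r)).comp_continuousOn
        (hA.mono fun u (hu : (u, r) ∈ U ×ˢ Set.univ) => hu.1)
  obtain ⟨δ, hδ, hle⟩ := (hU.prod isCompact_univ).exists_forall_le' hcont (a := 0)
    fun p hp => (hK p.1 hp.1).sum_row_pos p.2
  exact ⟨δ, hδ, fun u hu => ⟨(hK u hu).1, fun r => hle (u, r) ⟨hu, trivial⟩⟩⟩

lemma KoMat.exists_diagDominantWith {A : Matrix (Fin N) (Fin N) ℝ} (hA : KoMat A) :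
    ∃ δ > 0, DiagDominantWith δ A := by
  obtain ⟨δ, hδ, h⟩ := _root_.exists_diagDominantWith (U := (Set.univ : Set Unit))
    isCompact_univ continuousOn_const fun _ _ => hA
  exact ⟨δ, hδ, h () trivial⟩

lemma continuousOn_mulVec_sub (hA : ContinuousOn 𝔄 U) (hb : ContinuousOn 𝔅 U) :
    ContinuousOn (fun p : X × (Fin N → ℝ) => 𝔄 p.1 *ᵥ p.2 - 𝔅 p.1) (U ×ˢ Set.univ) := by
  rw [continuousOn_iff_continuous_domRestrict]
  have hfst : Continuous fun p : ↥(U ×ˢ (Set.univ : Set (Fin N → ℝ))) => p.1.1 :=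
    continuous_fst.comp continuous_subtype_val
  exact ((hA.comp_continuous hfst fun p => p.2.1).matrix_mulVec
    (continuous_snd.comp continuous_subtype_val)).sub (hb.comp_continuous hfst fun p => p.2.1)

lemma exists_mulVec_sub_apply_le (hU : IsCompact U) (hA : ContinuousOn 𝔄 U)
    (hb : ContinuousOn 𝔅 U) (R : ℝ) :
    ∃ C > 0, ∀ u ∈ U, ∀ z : Fin N → ℝ, ‖z‖ ≤ R → ∀ i, (𝔄 u *ᵥ z - 𝔅 u) i ≤ C := by
  obtain ⟨C, hC⟩ := (hU.prod (isCompact_closedBall 0 R)).exists_bound_of_continuousOn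
    ((continuousOn_mulVec_sub hA hb).mono (Set.prod_mono le_rfl (Set.subset_univ _)))
  refine ⟨max C 1, by positivity, fun u hu z hz i => ?_⟩
  calc (𝔄 u *ᵥ z - 𝔅 u) i ≤ ‖𝔄 u *ᵥ z - 𝔅 u‖ :=
        (Real.le_norm_self _).trans (norm_le_pi_norm _ i)
    _ ≤ C := hC (u, z) ⟨hu, mem_closedBall_zero_iff.2 hz⟩
    _ ≤ max C 1 := le_max_left _ _

end Families

/-- The hypotheses are the sign conditions of the obstacle problem
`min {max_u (A_u z - b_u), Ã z - b̃} = 0`. -/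
theorem norm_le_of_obstacle_ineqs {ι : Type*} {U : Set ι} {N : ℕ}
    {𝔄 : ι → Matrix (Fin N) (Fin N) ℝ} {𝔅 : ι → Fin N → ℝ} {At : Matrix (Fin N) (Fin N) ℝ}
    {bt z : Fin N → ℝ} {δ δt B Bt : ℝ} (hA : ∀ u ∈ U, DiagDominantWith δ (𝔄 u)) (hδ : 0 < δ)
    (hb : ∀ u ∈ U, ‖𝔅 u‖ ≤ B) (hAt : DiagDominantWith δt At) (hδt : 0 < δt) (hbt : ‖bt‖ ≤ Bt)
    (hlow : ∀ i, ∃ u ∈ U, 𝔅 u i ≤ (𝔄 u *ᵥ z) i)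
    (hupp : ∀ i, bt i < (At *ᵥ z) i → ∃ u ∈ U, (𝔄 u *ᵥ z) i ≤ 𝔅 u i) :
    ‖z‖ ≤ max (B / δ) (Bt / δt) := by
  have habs : ∀ (v : Fin N → ℝ) s, |v s| ≤ ‖v‖ := fun v s => by
    simpa using norm_le_pi_norm v s
  have hR : 0 ≤ max (B / δ) (Bt / δt) :=
    le_max_of_le_right (div_nonneg ((norm_nonneg _).trans hbt) hδt.le)
  refine (pi_norm_le_iff_of_nonneg hR).2 fun i => ?_
  have : Nonempty (Fin N) := ⟨i⟩
  obtain ⟨j, hj⟩ := Finite.exists_min z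
  obtain ⟨k, hk⟩ := Finite.exists_max z
  have hzj : -(B / δ) ≤ z j := by
    obtain ⟨u, hu, hbu⟩ := hlow j
    have hbuj := (abs_le.1 ((habs _ j).trans (hb u hu))).1
    have h := (hA u hu).apply_le_div hδ (z := -z) (fun s => neg_le_neg (hj s))
      ((norm_nonneg _).trans (hb u hu)) (by rw [mulVec_neg, Pi.neg_apply]; linarith)
    rw [Pi.neg_apply] at h
    linarith
  have hzk : z k ≤ max (B / δ) (Bt / δt) := by
    by_cases h : bt k < (At *ᵥ z) k
    · obtain ⟨u, hu, hbu⟩ := hupp k h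
      exact le_max_of_le_left <| (hA u hu).apply_le_div hδ hk ((norm_nonneg _).trans (hb u hu))
        (hbu.trans ((le_abs_self _).trans ((habs _ k).trans (hb u hu))))
    · exact le_max_of_le_right <| hAt.apply_le_div hδt hk ((norm_nonneg _).trans hbt)
        ((not_lt.1 h).trans ((le_abs_self _).trans ((habs _ k).trans hbt)))
  rw [Real.norm_eq_abs, abs_le]
  exact ⟨(neg_le_neg (le_max_left _ _)).trans (hzj.trans (hj i)), (hk i).trans hzk⟩

lemma PenaltyTerm.nonneg {N : ℕ} (P : PenaltyTerm N) (i : Fin N) (t : ℝ) : 0 ≤ P.π i t := by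
  rcases le_or_gt t 0 with ht | ht
  · exact (P.eq_zero i t ht).ge
  · exact (P.pos i t ht).le

lemma PenaltyTerm.abs_min_eq {N : ℕ} (P : PenaltyTerm N) (i : Fin N) {ρ m t : ℝ} (hρ : 0 < ρ)
    (hm : m - ρ * P.π i t = 0) : |min m (max (-t) 0 - P.π i t)| = m / ρ := by
  have hπ : P.π i t = m / ρ := by
    rw [eq_div_iff hρ.ne']
    linarith
  rcases le_or_gt t 0 with ht | ht
  · have hm0 : m = 0 := by rwa [P.eq_zero i t ht, mul_zero, sub_zero] at hm
    simp [P.eq_zero i t ht, hm0, ht]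
  · have hπ0 := P.pos i t ht
    rw [max_eq_right (by linarith), zero_sub, min_eq_right (by nlinarith), abs_neg,
      abs_of_pos hπ0, hπ]

section PenalisedEquation

variable {N : ℕ} {U : Set ℝ} {𝔄 : ℝ → Matrix (Fin N) (Fin N) ℝ} {𝔅 : ℝ → Fin N → ℝ}
  {At : Matrix (Fin N) (Fin N) ℝ} {bt : Fin N → ℝ} {P : PenaltyTerm N} {ρ : ℝ} {z : Fin N → ℝ}

lemma PenObstEq.exists_le_mulVec_apply (hz : PenObstEq 𝔄 𝔅 U At bt P ρ z) (hρ : 0 ≤ ρ)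
    (hU : IsCompact U) (hU₀ : U.Nonempty) (hf : ContinuousOn (fun u => 𝔄 u *ᵥ z - 𝔅 u) U)
    (i : Fin N) : ∃ u ∈ U, 𝔅 u i ≤ (𝔄 u *ᵥ z) i := by
  have hfi : ContinuousOn (fun u => (𝔄 u *ᵥ z - 𝔅 u) i) U :=
    (continuous_apply i).comp_continuousOn hf
  obtain ⟨u, hu, hmax : (𝔄 u *ᵥ z - 𝔅 u) i = _⟩ :=
    (hU.image_of_continuousOn hfi).sSup_mem (hU₀.image _)
  have heq := hz i
  rw [← hmax, Pi.sub_apply] at heq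
  have := mul_nonneg hρ (P.nonneg i ((bt - At *ᵥ z) i))
  exact ⟨u, hu, by linarith⟩

lemma PenObstEq.mulVec_apply_le (hz : PenObstEq 𝔄 𝔅 U At bt P ρ z) (hU : IsCompact U)
    (hf : ContinuousOn (fun u => 𝔄 u *ᵥ z - 𝔅 u) U) {i : Fin N} (hi : bt i < (At *ᵥ z) i)
    {u : ℝ} (hu : u ∈ U) : (𝔄 u *ᵥ z) i ≤ 𝔅 u i := by
  have hfi : ContinuousOn (fun u => (𝔄 u *ᵥ z - 𝔅 u) i) U :=
    (continuous_apply i).comp_continuousOn hf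
  have hsup := hz i
  rw [P.eq_zero i _ (by rw [Pi.sub_apply]; linarith), mul_zero, sub_zero] at hsup
  have h := le_csSup (hU.image_of_continuousOn hfi).bddAbove (Set.mem_image_of_mem _ hu)
  rw [hsup, Pi.sub_apply, sub_nonpos] at h
  exact h

theorem exists_norm_le_of_penObstEq (hU : IsCompact U) (hU₀ : U.Nonempty)
    (hA : ContinuousOn 𝔄 U) (hb : ContinuousOn 𝔅 U) (hK : ∀ u ∈ U, KoMat (𝔄 u))
    (hAt : KoMat At) :
    ∃ R, ∀ ρ > 0, ∀ (P : PenaltyTerm N) (z : Fin N → ℝ),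
      PenObstEq 𝔄 𝔅 U At bt P ρ z → ‖z‖ ≤ R := by
  obtain ⟨δ, hδ, hdom⟩ := exists_diagDominantWith hU hA hK
  obtain ⟨δt, hδt, hdomt⟩ := hAt.exists_diagDominantWith
  obtain ⟨B, hB⟩ := hU.exists_bound_of_continuousOn hb
  refine ⟨max (B / δ) (‖bt‖ / δt), fun ρ hρ P z hz => ?_⟩
  have hf : ContinuousOn (fun u => 𝔄 u *ᵥ z - 𝔅 u) U :=
    (continuousOn_mulVec_sub hA hb).comp (Continuous.prodMk_left z).continuousOn
      fun u hu => ⟨hu, trivial⟩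
  exact norm_le_of_obstacle_ineqs hdom hδ hB hdomt hδt le_rfl
    (hz.exists_le_mulVec_apply hρ.le hU hU₀ hf)
    fun i hi => ⟨_, hU₀.some_mem, hz.mulVec_apply_le hU hf hi hU₀.some_mem⟩

end PenalisedEquation

theorem penalised_obstacle_residual_estimate_general
    (N : ℕ) (a b : ℝ) (hab : a ≤ b)
    (𝔄 : ℝ → Matrix (Fin N) (Fin N) ℝ) (𝔅 : ℝ → (Fin N → ℝ))
    (hAcont : ContinuousOn 𝔄 (Set.Icc a b)) (hbcont : ContinuousOn 𝔅 (Set.Icc a b))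
    (hKo : ∀ u ∈ Set.Icc a b, KoMat (𝔄 u))
    (At : Matrix (Fin N) (Fin N) ℝ) (bt : Fin N → ℝ) (hAt : KoMat At) :
    ∃ C > (0:ℝ), ∀ ρ > (0:ℝ), ∀ P : PenaltyTerm N, ∀ z : Fin N → ℝ,
      PenObstEq 𝔄 𝔅 (Set.Icc a b) At bt P ρ z →
      ‖(fun i : Fin N =>
          min (sSup ((fun u => (𝔄 u *ᵥ z - 𝔅 u) i) '' Set.Icc a b))
            (max ((At *ᵥ z - bt) i) 0 - P.π i ((bt - At *ᵥ z) i)))‖ ≤ C / ρ := by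
  obtain ⟨R, hR⟩ := exists_norm_le_of_penObstEq (bt := bt) isCompact_Icc
    (Set.nonempty_Icc.2 hab) hAcont hbcont hKo hAt
  obtain ⟨C, hC, hCbound⟩ := exists_mulVec_sub_apply_le isCompact_Icc hAcont hbcont R
  refine ⟨C, hC, fun ρ hρ P z hz => (pi_norm_le_iff_of_nonneg (by positivity)).2 fun i => ?_⟩
  have hsup : sSup ((fun u => (𝔄 u *ᵥ z - 𝔅 u) i) '' Set.Icc a b) ≤ C :=
    Real.sSup_le (by rintro _ ⟨u, hu, rfl⟩; exact hCbound u hu z (hR ρ hρ P z hz) i) hC.le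
  rw [Real.norm_eq_abs, ← neg_sub bt, Pi.neg_apply, P.abs_min_eq i hρ (hz i)]
  exact div_le_div_of_nonneg_right hsup hρ.le

/-- The residual estimate
`‖ min{ max_{u∈U}{A_u z_ρ - b_u}, max{Ã z_ρ - b̃, 0} - Π(b̃ - Ã z_ρ) } ‖∞ ≤ C/ρ`
with `C > 0` independent of `ρ` and of the penalty term `Π`. -/
theorem penalised_obstacle_residual_estimate
    (N : ℕ) (hN : 0 < N) (a b : ℝ) (hab : a ≤ b)
    (𝔄 : ℝ → Matrix (Fin N) (Fin N) ℝ) (𝔅 : ℝ → (Fin N → ℝ))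
    (hAcont : ContinuousOn 𝔄 (Set.Icc a b)) (hbcont : ContinuousOn 𝔅 (Set.Icc a b))
    (hKo : ∀ u ∈ Set.Icc a b, KoMat (𝔄 u))
    (At : Matrix (Fin N) (Fin N) ℝ) (bt : Fin N → ℝ) (hAt : KoMat At) :
    ∃ C > (0:ℝ), ∀ ρ > (0:ℝ), ∀ P : PenaltyTerm N, ∀ z : Fin N → ℝ,
      PenObstEq 𝔄 𝔅 (Set.Icc a b) At bt P ρ z →
      ‖(fun i : Fin N =>
          min (sSup ((fun u => (𝔄 u *ᵥ z - 𝔅 u) i) '' Set.Icc a b))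
            (max ((At *ᵥ z - bt) i) 0 - P.π i ((bt - At *ᵥ z) i)))‖ ≤ C / ρ :=
  penalised_obstacle_residual_estimate_general N a b hab 𝔄 𝔅 hAcont hbcont hKo At bt hAt
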